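/- Let λ > 0, β > 0 with β ≠ 2λ, and σ ∈ ℝ. Then (σ²/(2β)) ∫_0^1 F_{0,0}(e^{2πit}) dt = σ² / ( λ β (λ+β) ). -/

import Mathlib

open Complex Finset intervalIntegral

noncomputable section

/-- F_{j,τ}(z) = (z^j/(λ−β−λz)) (e^{−βτ}(1−z)²/(λ−(λ+β)z) − 2β e^{λ(z−1)τ}/(λ(λ+β−λz))). -/
def Ffun (lam beta : ℝ) (j : ℕ) (τ : ℝ) (z : ℂ) : ℂ :=
  (z ^ j / (lam - beta - lam * z)) *
    (Complex.exp (-(beta : ℂ) * τ) * (1 - z) ^ 2 / (lam - (lam + beta) * z) -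
      2 * beta * Complex.exp ((lam : ℂ) * (z - 1) * τ) / (lam * (lam + beta - lam * z)))

/-!
The integral over `t ∈ [0, 1]` of `F_{0,0}(e^{2πit})` is the average of `F_{0,0}` over the unit
circle. The pole of `F_{0,0}` at `(λ - β)/λ` is removable, and it splits into partial fractions
`1/(λ(λ+β)) + λ⁻²(e - z)⁻¹ + (λ+β)⁻²(z - d)⁻¹` with `d = λ/(λ+β)` inside and `e = (λ+β)/λ`
outside the unit disc. By the mean value property the part holomorphic on the closed disc averages
to its value `2/(λ(λ+β))` at the centre, while the simple pole at `d ≠ 0` averages to zero.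
Since `β ≠ 2λ`, the removable point `(λ - β)/λ` is not on the circle, so the junk value that
division by zero gives `Ffun` there does not enter the average.
-/

open Metric Real

theorem intervalIntegral_comp_exp_two_pi_I_eq_circleAverage {E : Type*} [NormedAddCommGroup E]
    [NormedSpace ℂ E] (f : ℂ → E) :
    ∫ t in (0 : ℝ)..1, f (exp (2 * π * I * t)) = circleAverage f 0 1 := by
  have hcirc (t : ℝ) : exp (2 * π * I * t) = circleMap 0 1 (2 * π * t) := by
    simp only [circleMap_zero, ofReal_one, one_mul, ofReal_mul, ofReal_ofNat]
    ring_nf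
  simp_rw [hcirc, circleAverage_def, intervalIntegral.integral_comp_mul_left
    (fun θ => f (circleMap 0 1 θ)) two_pi_pos.ne', mul_zero, mul_one]

theorem circleAverage_sub_inv_of_mem_ball {c w : ℂ} {R : ℝ} (hw : w ∈ ball c |R|) (hwc : w ≠ c) :
    circleAverage (fun z => (z - w)⁻¹) c R = 0 := by
  have hint : CircleIntegrable (fun z => (z - w)⁻¹) c R :=
    circleIntegrable_sub_inv_iff.2 (Or.inr fun h => (mem_sphere.1 h ▸ mem_ball.1 hw).false)
  have hmean := (diffContOnCl_const (c := (1 : ℂ))).circleAverage_smul_div hw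
  have hsplit : Set.EqOn (fun z => ((z - c) / (z - w)) • (1 : ℂ))
      (fun z => 1 + (w - c) • (z - w)⁻¹) (sphere c |R|) := by
    intro z hz
    have : z - w ≠ 0 := sub_ne_zero.2 fun h => (h ▸ mem_sphere.1 hz ▸ mem_ball.1 hw).false
    simp only [smul_eq_mul, mul_one]
    field_simp
    ring
  rw [circleAverage_congr_sphere hsplit, circleAverage_fun_add (f₂ := fun z => (w - c) • (z - w)⁻¹)
    (circleIntegrable_const _ _ _) (hint.const_smul (a := w - c)), circleAverage_const,
    circleAverage_fun_smul] at hmean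
  simpa [sub_ne_zero.2 hwc] using hmean

theorem DiffContOnCl.circleAverage_add_mul_sub_inv {f : ℂ → ℂ} {c w : ℂ} {R : ℝ}
    (hf : DiffContOnCl ℂ f (ball c |R|)) (hw : w ∈ ball c |R|) (hwc : w ≠ c) (b : ℂ) :
    Real.circleAverage (fun z => f z + b * (z - w)⁻¹) c R = f c := by
  have hsphere : sphere c |R| ⊆ closure (ball c |R|) := by
    rw [closure_ball c (pos_of_mem_ball hw).ne']
    exact sphere_subset_closedBall
  have hint : CircleIntegrable (fun z => (z - w)⁻¹) c R :=
    circleIntegrable_sub_inv_iff.2 (Or.inr fun h => (mem_sphere.1 h ▸ mem_ball.1 hw).false)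
  simp_rw [← smul_eq_mul b]
  rw [circleAverage_fun_add (f₂ := fun z => b • (z - w)⁻¹)
    ((hf.2.mono hsphere).circleIntegrable') (hint.const_smul (a := b)), circleAverage_fun_smul,
    circleAverage_sub_inv_of_mem_ball hw hwc, smul_zero, add_zero, hf.circleAverage]

theorem diffContOnCl_inv_sub {c w : ℂ} {R : ℝ} (hw : w ∉ closedBall c R) :
    DiffContOnCl ℂ (fun z => (w - z)⁻¹) (ball c R) :=
  (differentiable_id.diffContOnCl.const_sub w).inv fun _ hz =>
    sub_ne_zero.2 fun h => hw (h ▸ closure_ball_subset_closedBall hz)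

theorem ofReal_sub_ofReal_mul_ne_zero {a b : ℝ} (hab : |a| ≠ |b|) {z : ℂ} (hz : ‖z‖ = 1) :
    (a : ℂ) - b * z ≠ 0 := by
  intro h
  apply hab
  have := congrArg norm (sub_eq_zero.1 h)
  rwa [norm_mul, hz, mul_one, norm_real, norm_real] at this

theorem Ffun_zero_zero_eq {lam beta : ℝ} {z : ℂ} (hl : (lam : ℂ) ≠ 0) (hlb : (lam : ℂ) + beta ≠ 0)
    (hA : (lam : ℂ) - beta - lam * z ≠ 0) (hB : (lam : ℂ) - (lam + beta) * z ≠ 0)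
    (hC : (lam : ℂ) + beta - lam * z ≠ 0) :
    Ffun lam beta 0 0 z = (1 / (lam * (lam + beta)) + 1 / lam ^ 2 * ((lam + beta) / lam - z)⁻¹)
      + 1 / (lam + beta) ^ 2 * (z - lam / (lam + beta))⁻¹ := by
  have hd : z - lam / (lam + beta) = -((lam : ℂ) - (lam + beta) * z) / (lam + beta) := by
    field_simp; ring
  have he : ((lam : ℂ) + beta) / lam - z = (lam + beta - lam * z) / lam := by
    field_simp
  rw [hd, he, inv_div, inv_div]
  simp only [Ffun, pow_zero, ofReal_zero, mul_zero, Complex.exp_zero]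
  -- `field_simp` would reorder `(λ + β) * z` and then no longer recognise `hB`
  generalize hBdef : (lam : ℂ) - (lam + beta) * z = B at *
  field_simp
  rw [← hBdef]
  ring

/-- for β ≠ 2λ, (σ²/(2β)) ∫₀¹ F_{0,0}(e^{2πit}) dt = σ² / (λβ(λ+β)). -/
theorem stmt14 (lam beta σ : ℝ) (hlam : 0 < lam) (hbeta : 0 < beta) (hne : beta ≠ 2 * lam) :
    ((σ : ℂ) ^ 2 / (2 * beta)) *
        ∫ t in (0 : ℝ)..1, Ffun lam beta 0 0 (Complex.exp (2 * Real.pi * Complex.I * t)) =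
      ((σ ^ 2 / (lam * beta * (lam + beta)) : ℝ) : ℂ) := by
  have hlb : 0 < lam + beta := by linarith
  have hl : (lam : ℂ) ≠ 0 := ofReal_ne_zero.2 hlam.ne'
  have hb : (beta : ℂ) ≠ 0 := ofReal_ne_zero.2 hbeta.ne'
  have hlb' : (lam : ℂ) + beta ≠ 0 := mod_cast hlb.ne'
  have hd : (lam : ℂ) / (lam + beta) ∈ ball 0 |1| := by
    rw [mem_ball_zero_iff, abs_one, ← ofReal_add, ← ofReal_div, norm_real, Real.norm_eq_abs,
      abs_of_pos (by positivity), div_lt_one hlb]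
    linarith
  have he : ((lam : ℂ) + beta) / lam ∉ closedBall 0 |1| := by
    rw [mem_closedBall_zero_iff, abs_one, not_le, ← ofReal_add, ← ofReal_div, norm_real,
      Real.norm_eq_abs, abs_of_pos (by positivity), one_lt_div hlam]
    linarith
  have hF : Set.EqOn (Ffun lam beta 0 0)
      (fun z => (1 / (lam * (lam + beta)) + 1 / lam ^ 2 * ((lam + beta) / lam - z)⁻¹)
        + 1 / (lam + beta) ^ 2 * (z - lam / (lam + beta))⁻¹) (sphere 0 |1|) := by
    intro z hz
    rw [abs_one, mem_sphere_zero_iff_norm] at hz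
    have hA : |lam - beta| ≠ |lam| := by
      rw [abs_of_pos hlam]
      rcases abs_cases (lam - beta) with ⟨h, -⟩ | ⟨h, -⟩
      · linarith
      · exact fun _ => hne (by linarith)
    have hB : |lam| ≠ |lam + beta| := by rw [abs_of_pos hlam, abs_of_pos hlb]; linarith
    refine Ffun_zero_zero_eq hl hlb' ?_ ?_ ?_
    · simpa using ofReal_sub_ofReal_mul_ne_zero hA hz
    · simpa using ofReal_sub_ofReal_mul_ne_zero hB hz
    · simpa using ofReal_sub_ofReal_mul_ne_zero hB.symm hz
  have hH : DiffContOnCl ℂ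
      (fun z : ℂ => 1 / (lam * (lam + beta)) + 1 / lam ^ 2 * ((lam + beta) / lam - z)⁻¹)
      (ball 0 |1|) :=
    ((diffContOnCl_const (c := 1 / (lam : ℂ) ^ 2)).smul (diffContOnCl_inv_sub he)).const_add _
  rw [intervalIntegral_comp_exp_two_pi_I_eq_circleAverage, circleAverage_congr_sphere hF,
    hH.circleAverage_add_mul_sub_inv hd (div_ne_zero hl hlb'), sub_zero, inv_div]
  push_cast
  field_simp
  ring
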